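/- With the action · and cocycle ω of H4 on H_ss as defined, the normalization condition holds: for all h, l in H4, ω(h, l) = ω(h1, l1)(h2 l2 · 1), where 1 is the unit of H_ss. -/

import Mathlib

open Quaternion TensorProduct

noncomputable section

/-- Sweedler's Hopf algebra `H₄` as a vector space over `ℝ`,
with basis `1, g, ν, gν` indexed by `Fin 4`. -/
abbrev H4 := Fin 4 → ℝ

namespace H4

/-- The canonical basis `1, g, ν, gν` of Sweedler's Hopf algebra. -/
def B : Module.Basis (Fin 4) ℝ H4 := Pi.basisFun ℝ (Fin 4)

/-- The unit `1` of `H₄`. -/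
def u : H4 := B 0
/-- The grouplike element `g` of `H₄`. -/
def g : H4 := B 1
/-- The element `ν` of `H₄`. -/
def v : H4 := B 2
/-- The element `gν` of `H₄`. -/
def w : H4 := B 3

/-- The multiplication of Sweedler's Hopf algebra, as a bilinear map:
`g² = 1`, `ν² = 0`, `gν = -νg`. -/
def mul4 : H4 →ₗ[ℝ] H4 →ₗ[ℝ] H4 :=
  B.constr ℝ ![B.constr ℝ ![u, g, v, w],
               B.constr ℝ ![g, u, w, v],
               B.constr ℝ ![v, -w, 0, 0],
               B.constr ℝ ![w, -v, 0, 0]]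

/-- The comultiplication of Sweedler's Hopf algebra:
`Δ(1) = 1⊗1`, `Δ(g) = g⊗g`, `Δ(ν) = g⊗ν + ν⊗1`, `Δ(gν) = 1⊗gν + gν⊗g`. -/
def Δ : H4 →ₗ[ℝ] H4 ⊗[ℝ] H4 :=
  B.constr ℝ ![u ⊗ₜ u, g ⊗ₜ g, g ⊗ₜ v + v ⊗ₜ u, u ⊗ₜ w + w ⊗ₜ g]

end H4

/-- The split semi-quaternion algebra `H_ss`:
`e1² = 1`, `e2² = 0`, `e3² = 0`, `e1e2 = e3 = -e2e1`,
`e2e3 = 0 = -e3e2`, `e3e1 = -e2 = -e1e3`. -/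
abbrev Hss := ℍ[ℝ, 1, 0]

namespace Hss
def e1 : Hss := ⟨0, 1, 0, 0⟩
def e2 : Hss := ⟨0, 0, 1, 0⟩
def e3 : Hss := ⟨0, 0, 0, 1⟩
/-- The basis `1, e1, e2, e3` of the split semi-quaternion algebra. -/
def Qb : Module.Basis (Fin 4) ℝ Hss := QuaternionAlgebra.basisOneIJK 1 0 0
end Hss

variable (k1 k2 k3 k4 l1 l2 l3 l4 : ℝ)

/-- The value `ν · 1 = ω(1,ν) = ω(ν,1) = k₁ + k₂e₁ + k₃e₂ - k₄e₃`. -/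
def nu1 : Hss := k1 • 1 + k2 • Hss.e1 + k3 • Hss.e2 - k4 • Hss.e3

/-- The value `gν · 1 = ω(1,gν) = ω(gν,1) = l₁ + l₂e₁ + l₃e₂ + l₄e₃`. -/
def gnu1 : Hss := l1 • 1 + l2 • Hss.e1 + l3 • Hss.e2 + l4 • Hss.e3

/-- The partial action `· : H₄ ⊗ H_ss → H_ss` from the paper:
`1` acts as the identity, `g · x = 0`, and `ν`, `gν` act via the parameters
`k₁,…,k₄,l₁,…,l₄` as in the table. -/
def actSS : H4 →ₗ[ℝ] Hss →ₗ[ℝ] Hss :=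
  H4.B.constr ℝ
    ![LinearMap.id, 0,
      Hss.Qb.constr ℝ
        ![nu1 k1 k2 k3 k4,
          k2 • 1 + k1 • Hss.e1 + k4 • Hss.e2 - k3 • Hss.e3,
          k1 • Hss.e2 + k2 • Hss.e3,
          k2 • Hss.e2 + k1 • Hss.e3],
      Hss.Qb.constr ℝ
        ![gnu1 l1 l2 l3 l4,
          l2 • 1 + l1 • Hss.e1 + l4 • Hss.e2 + l3 • Hss.e3,
          l1 • Hss.e2 - l2 • Hss.e3,
          -l2 • Hss.e2 + l1 • Hss.e3]]

/-- The value `ω(ν,ν) = (k₁²+k₂²) + 2k₁k₂e₁ + 2k₁k₃e₂ - 2k₁k₄e₃`. -/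
def omvv : Hss :=
  (k1 ^ 2 + k2 ^ 2) • 1 + (2 * k1 * k2) • Hss.e1
    + (2 * k1 * k3) • Hss.e2 - (2 * k1 * k4) • Hss.e3

/-- The value `ω(ν,gν) = ω(gν,ν)`. -/
def omvw : Hss :=
  (k1 * l1 + k2 * l2) • 1 + (k2 * l1 + k1 * l2) • Hss.e1
    + (k3 * l1 + k4 * l2 + k1 * l3 + k2 * l4) • Hss.e2
    + (-(k4 * l1) - k3 * l2 + k2 * l3 + k1 * l4) • Hss.e3

/-- The cocycle `ω : H₄ ⊗ H₄ → H_ss` from the paper's table. -/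
def omSS : H4 →ₗ[ℝ] H4 →ₗ[ℝ] Hss :=
  H4.B.constr ℝ
    ![H4.B.constr ℝ ![1, 0, nu1 k1 k2 k3 k4, gnu1 l1 l2 l3 l4],
      0,
      H4.B.constr ℝ ![nu1 k1 k2 k3 k4, 0, omvv k1 k2 k3 k4,
        omvw k1 k2 k3 k4 l1 l2 l3 l4],
      H4.B.constr ℝ ![gnu1 l1 l2 l3 l4, 0,
        omvw k1 k2 k3 k4 l1 l2 l3 l4, 0]]

/-!
Both sides are bilinear in `(h, l)`, so it suffices to compare them on the basis `1, g, ν, gν`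
of `H₄`. Since `ω` vanishes as soon as one argument is `g`, and `g · 1 = 0`, most terms of
`ω(h₁, l₁)(h₂l₂ · 1)` drop out. What remains is the identity `ω(ν, gν) = ω(gν, ν) = (ν · 1)(gν · 1)`
in `H_ss`, and for `h = l = gν` the cancellation of `ω(1, gν)(gν g · 1) = -(gν · 1)(ν · 1)` against
`ω(gν, 1)(g gν · 1) = (gν · 1)(ν · 1)`.
-/

theorem QuaternionAlgebra.basisOneIJK_constr_one {R S M : Type*} [CommRing R] [Semiring S]
    [AddCommMonoid M] [Module R M] [Module S M] [SMulCommClass R S M] (c₁ c₂ c₃ : R)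
    (f : Fin 4 → M) : (basisOneIJK c₁ c₂ c₃).constr S f 1 = f 0 := by
  have : basisOneIJK c₁ c₂ c₃ 0 = 1 := by
    ext <;> simp [basisOneIJK, equivTuple]
  rw [← this, Module.Basis.constr_basis]

theorem LinearMap.eq_comp_tmul_of_basis {R M N M' N' P ι κ : Type*} [CommSemiring R]
    [AddCommMonoid M] [AddCommMonoid N] [AddCommMonoid M'] [AddCommMonoid N'] [AddCommMonoid P]
    [Module R M] [Module R N] [Module R M'] [Module R N'] [Module R P]
    (b₁ : Module.Basis ι R M) (b₂ : Module.Basis κ R N) {B : M →ₗ[R] N →ₗ[R] P}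
    {Φ : M' ⊗[R] N' →ₗ[R] P} {f : M →ₗ[R] M'} {f' : N →ₗ[R] N'}
    (h : ∀ i j, B (b₁ i) (b₂ j) = Φ (f (b₁ i) ⊗ₜ f' (b₂ j))) (x : M) (y : N) :
    B x y = Φ (f x ⊗ₜ f' y) :=
  congr_fun₂ (ext_basis b₁ b₂ (B' := (curry Φ).compl₁₂ f f') h) x y

namespace H4

lemma coe_B : ⇑B = ![u, g, v, w] := by
  funext i; fin_cases i <;> rfl

@[simp] lemma Δ_u : Δ u = u ⊗ₜ u := by simp [Δ, u]
@[simp] lemma Δ_g : Δ g = g ⊗ₜ g := by simp [Δ, g]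
@[simp] lemma Δ_v : Δ v = g ⊗ₜ v + v ⊗ₜ u := by simp [Δ, v]
@[simp] lemma Δ_w : Δ w = u ⊗ₜ w + w ⊗ₜ g := by simp [Δ, w]

@[simp] lemma mul4_u_u : mul4 u u = u := by simp [mul4, u, g, v, w]
@[simp] lemma mul4_u_g : mul4 u g = g := by simp [mul4, u, g, v, w]
@[simp] lemma mul4_u_v : mul4 u v = v := by simp [mul4, u, g, v, w]
@[simp] lemma mul4_u_w : mul4 u w = w := by simp [mul4, u, g, v, w]
@[simp] lemma mul4_g_u : mul4 g u = g := by simp [mul4, u, g, v, w]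
@[simp] lemma mul4_g_g : mul4 g g = u := by simp [mul4, u, g, v, w]
@[simp] lemma mul4_g_v : mul4 g v = w := by simp [mul4, u, g, v, w]
@[simp] lemma mul4_g_w : mul4 g w = v := by simp [mul4, u, g, v, w]
@[simp] lemma mul4_v_u : mul4 v u = v := by simp [mul4, u, g, v, w]
@[simp] lemma mul4_v_g : mul4 v g = -w := by simp [mul4, u, g, v, w]
@[simp] lemma mul4_v_v : mul4 v v = 0 := by simp [mul4, u, g, v, w]
@[simp] lemma mul4_v_w : mul4 v w = 0 := by simp [mul4, u, g, v, w]
@[simp] lemma mul4_w_u : mul4 w u = w := by simp [mul4, u, g, v, w]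
@[simp] lemma mul4_w_g : mul4 w g = -v := by simp [mul4, u, g, v, w]
@[simp] lemma mul4_w_v : mul4 w v = 0 := by simp [mul4, u, g, v, w]
@[simp] lemma mul4_w_w : mul4 w w = 0 := by simp [mul4, u, g, v, w]

end H4

open H4

@[simp] lemma omSS_g : omSS k1 k2 k3 k4 l1 l2 l3 l4 g = 0 := by simp [omSS, g]
@[simp] lemma omSS_u_u : omSS k1 k2 k3 k4 l1 l2 l3 l4 u u = 1 := by simp [omSS, u]
@[simp] lemma omSS_u_g : omSS k1 k2 k3 k4 l1 l2 l3 l4 u g = 0 := by simp [omSS, u, g]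
@[simp] lemma omSS_u_v : omSS k1 k2 k3 k4 l1 l2 l3 l4 u v = nu1 k1 k2 k3 k4 := by
  simp [omSS, u, v]
@[simp] lemma omSS_u_w : omSS k1 k2 k3 k4 l1 l2 l3 l4 u w = gnu1 l1 l2 l3 l4 := by
  simp [omSS, u, w]
@[simp] lemma omSS_v_u : omSS k1 k2 k3 k4 l1 l2 l3 l4 v u = nu1 k1 k2 k3 k4 := by
  simp [omSS, u, v]
@[simp] lemma omSS_v_g : omSS k1 k2 k3 k4 l1 l2 l3 l4 v g = 0 := by simp [omSS, g, v]
@[simp] lemma omSS_v_v : omSS k1 k2 k3 k4 l1 l2 l3 l4 v v = omvv k1 k2 k3 k4 := by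
  simp [omSS, v]
@[simp] lemma omSS_v_w : omSS k1 k2 k3 k4 l1 l2 l3 l4 v w = omvw k1 k2 k3 k4 l1 l2 l3 l4 := by
  simp [omSS, v, w]
@[simp] lemma omSS_w_u : omSS k1 k2 k3 k4 l1 l2 l3 l4 w u = gnu1 l1 l2 l3 l4 := by
  simp [omSS, u, w]
@[simp] lemma omSS_w_g : omSS k1 k2 k3 k4 l1 l2 l3 l4 w g = 0 := by simp [omSS, g, w]
@[simp] lemma omSS_w_v : omSS k1 k2 k3 k4 l1 l2 l3 l4 w v = omvw k1 k2 k3 k4 l1 l2 l3 l4 := by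
  simp [omSS, v, w]
@[simp] lemma omSS_w_w : omSS k1 k2 k3 k4 l1 l2 l3 l4 w w = 0 := by simp [omSS, w]

@[simp] lemma actSS_g : actSS k1 k2 k3 k4 l1 l2 l3 l4 g = 0 := by simp [actSS, g]
@[simp] lemma actSS_u_one : actSS k1 k2 k3 k4 l1 l2 l3 l4 u 1 = 1 := by simp [actSS, u]
@[simp] lemma actSS_v_one : actSS k1 k2 k3 k4 l1 l2 l3 l4 v 1 = nu1 k1 k2 k3 k4 := by
  simp only [actSS, v, Hss.Qb, Module.Basis.constr_basis, Matrix.cons_val,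
    QuaternionAlgebra.basisOneIJK_constr_one]
@[simp] lemma actSS_w_one : actSS k1 k2 k3 k4 l1 l2 l3 l4 w 1 = gnu1 l1 l2 l3 l4 := by
  simp only [actSS, w, Hss.Qb, Module.Basis.constr_basis, Matrix.cons_val,
    QuaternionAlgebra.basisOneIJK_constr_one]

theorem nu1_mul_gnu1 : nu1 k1 k2 k3 k4 * gnu1 l1 l2 l3 l4 = omvw k1 k2 k3 k4 l1 l2 l3 l4 := by
  ext <;> simp [nu1, gnu1, omvw, Hss.e1, Hss.e2, Hss.e3] <;> ring

/-- The normalization condition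
`ω(h,l) = ω(h₁,l₁)(h₂l₂·1)` for all `h, l ∈ H₄`. -/
theorem omSS_normalized (h l : H4) :
    (omSS k1 k2 k3 k4 l1 l2 l3 l4) h l =
    (LinearMap.mul' ℝ Hss ∘ₗ
        TensorProduct.map (TensorProduct.lift (omSS k1 k2 k3 k4 l1 l2 l3 l4))
          ((actSS k1 k2 k3 k4 l1 l2 l3 l4).flip 1 ∘ₗ TensorProduct.lift H4.mul4) ∘ₗ
        (tensorTensorTensorComm ℝ H4 H4 H4 H4).toLinearMap)
      (H4.Δ h ⊗ₜ[ℝ] H4.Δ l) := by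
  refine LinearMap.eq_comp_tmul_of_basis H4.B H4.B (fun i j => ?_) h l
  rw [coe_B]
  fin_cases i <;> fin_cases j <;> simp [tmul_add, add_tmul, nu1_mul_gnu1]
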